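/- Let X be a nonempty finite set, m and ℓ natural numbers, D a probability distribution on X, δ, γ > 0, T : (X × {0,1})^m × {0,1}^ℓ → {0,1}, T̃ : (X × {0,1})^m → [0,1], f : X → {0,1}, and f̃ : X → [0,1]. Let T̄(x, y) = 2^{−ℓ}·Σ_{r ∈ {0,1}^ℓ} T(x, y, r). Suppose that (i) for every R in R(T) ∪ R(T̃), it holds that |E_{x∼D}[R(x)·(f(x) − f̃(x))]| ≤ δ, and (ii) for every C in Γ_m({f̃}), it holds that |E[C(x, y)·(T̄(x, y) − T̃(x, y))]| ≤ γ, where the expectation is over x_1, ..., x_m drawn i.i.d. from D and y_1, ..., y_m i.i.d. uniform bits independent of the x_i. Then |E[T(x, f(x), r)] − E[T̃(x, f(x))]| ≤ 4mδ + 2^m·γ, where x_1, ..., x_m are drawn i.i.d. from D, f(x) denotes the label vector (f(x_1), ..., f(x_m)), and r is uniform on {0,1}^ℓ independent of x. -/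
import Mathlib


attribute [local instance] Classical.propDecidable

/-- `bern p b` is the probability that a Bernoulli(`p`) bit equals `b`. -/
noncomputable def bern (p : ℝ) (b : Bool) : ℝ := if b then p else 1 - p

/-- Expectation of `S : (X × {0,1})^m → ℝ` when `x 1, …, x m` are drawn i.i.d. from
the distribution `D` on `X` and each label `y i` given `x i` is an independent
Bernoulli(`f (x i)`) bit.  (Taking `f = 1/2` gives i.i.d. uniform labels.) -/
noncomputable def labeledExp {X : Type*} [Fintype X] (m : ℕ)
    (D : X → ℝ) (f : X → ℝ) (S : (Fin m → X) → (Fin m → Bool) → ℝ) : ℝ :=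
  ∑ x : Fin m → X, ∑ y : Fin m → Bool,
    (∏ i, D (x i)) * (∏ i, bern (f (x i)) (y i)) * S x y

noncomputable def E' {X : Type*} [Fintype X] (m : ℕ) (D : X → ℝ)
    (p : Fin m → X → ℝ) (S : (Fin m → X) → (Fin m → Bool) → ℝ) : ℝ :=
  ∑ x : Fin m → X, ∑ y : Fin m → Bool,
    (∏ i, D (x i)) * (∏ i, bern (p i (x i)) (y i)) * S x y

lemma bern_nonneg {p : ℝ} (h : p ∈ Set.Icc (0:ℝ) 1) (b : Bool) : 0 ≤ bern p b := by
  cases b <;> simp [bern]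
  · linarith [h.2]
  · exact h.1

lemma bern_sum (p : ℝ) : ∑ b : Bool, bern p b = 1 := by simp [bern]

lemma bern_sub (a c : ℝ) (b : Bool) :
    bern a b - bern c b = (if b then (1:ℝ) else -1) * (a - c) := by
  cases b <;> simp [bern]

lemma splitAt_update {X : Type*} {m : ℕ} (j : Fin m) (v w : X) (x' : {i : Fin m // i ≠ j} → X) :
    (Equiv.funSplitAt j X).symm (v, x') =
      Function.update ((Equiv.funSplitAt j X).symm (w, x')) j v := by
  funext i
  rcases eq_or_ne i j with rfl | h
  · simp
  · simp [Function.update_of_ne h, h]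

lemma sum_split {X : Type*} [Fintype X] {m : ℕ} (j : Fin m) (H : (Fin m → X) → ℝ) :
    ∑ x : Fin m → X, H x
      = ∑ v : X, ∑ x' : {i : Fin m // i ≠ j} → X, H ((Equiv.funSplitAt j X).symm (v, x')) := by
  rw [← Equiv.sum_comp (Equiv.funSplitAt j X).symm H, Fintype.sum_prod_type]

lemma E'_step {X : Type*} [Fintype X] [Nonempty X] (m : ℕ)
    (D : X → ℝ) (hD0 : ∀ x, 0 ≤ D x) (hD1 : ∑ x, D x = 1)
    (p q : Fin m → X → ℝ)
    (hq : ∀ i x, q i x ∈ Set.Icc (0:ℝ) 1)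
    (j : Fin m) (hpq : ∀ i, i ≠ j → p i = q i)
    (S : (Fin m → X) → (Fin m → Bool) → ℝ) (δ : ℝ)
    (hS : ∀ (xs : Fin m → X) (y : Fin m → Bool),
      |∑ v, D v * (S (Function.update xs j v) y * (p j v - q j v))| ≤ δ) :
    |E' m D p S - E' m D q S| ≤ 2 * δ := by
  classical
  set e := Equiv.funSplitAt j X with he
  set w0 : X := Classical.arbitrary X
  -- step 1: difference as single double sum
  have h1 : E' m D p S - E' m D q S
      = ∑ x : Fin m → X, ∑ y : Fin m → Bool,
          (∏ i, D (x i)) * ((∏ i ∈ Finset.univ.erase j, bern (q i (x i)) (y i))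
            * ((if y j then (1:ℝ) else -1) * (p j (x j) - q j (x j)))) * S x y := by
    rw [E', E', ← Finset.sum_sub_distrib]
    refine Finset.sum_congr rfl fun x _ => ?_
    rw [← Finset.sum_sub_distrib]
    refine Finset.sum_congr rfl fun y _ => ?_
    have hp' : (∏ i, bern (p i (x i)) (y i))
        = bern (p j (x j)) (y j) * ∏ i ∈ Finset.univ.erase j, bern (q i (x i)) (y i) := by
      rw [← Finset.mul_prod_erase Finset.univ _ (Finset.mem_univ j)]
      congr 1
      exact Finset.prod_congr rfl fun i hi => by
        rw [hpq i (Finset.ne_of_mem_erase hi)]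
    have hq' : (∏ i, bern (q i (x i)) (y i))
        = bern (q j (x j)) (y j) * ∏ i ∈ Finset.univ.erase j, bern (q i (x i)) (y i) := by
      rw [← Finset.mul_prod_erase Finset.univ _ (Finset.mem_univ j)]
    rw [hp', hq']
    have hb := bern_sub (p j (x j)) (q j (x j)) (y j)
    linear_combination ((∏ i ∈ Finset.univ.erase j, bern (q i (x i)) (y i)) *
      (∏ i, D (x i)) * S x y) * hb
  set base : ({i : Fin m // i ≠ j} → X) → (Fin m → X) := fun x' => e.symm (w0, x') with hbase
  set Pd : ({i : Fin m // i ≠ j} → X) → ℝ :=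
    fun x' => ∏ i ∈ Finset.univ.erase j, D (base x' i) with hPd
  set Pb : ({i : Fin m // i ≠ j} → X) → (Fin m → Bool) → ℝ :=
    fun x' y => ∏ i ∈ Finset.univ.erase j, bern (q i (base x' i)) (y i) with hPb
  have hpoint : ∀ (v : X) (x' : {i : Fin m // i ≠ j} → X) (y : Fin m → Bool),
      (∏ i, D ((e.symm (v, x')) i)) *
        ((∏ i ∈ Finset.univ.erase j, bern (q i ((e.symm (v, x')) i)) (y i))
          * ((if y j then (1:ℝ) else -1) * (p j ((e.symm (v, x')) j) - q j ((e.symm (v, x')) j))))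
        * S (e.symm (v, x')) y
      = (Pd x' * Pb x' y) * ((if y j then (1:ℝ) else -1) *
          (D v * (S (Function.update (base x') j v) y * (p j v - q j v)))) := by
    intro v x' y
    have hx : e.symm (v, x') = Function.update (base x') j v := splitAt_update j v w0 x'
    rw [hx]
    have hDprod : (∏ i, D (Function.update (base x') j v i)) = D v * Pd x' := by
      rw [← Finset.mul_prod_erase Finset.univ _ (Finset.mem_univ j),
        Function.update_self]
      congr 1
      exact Finset.prod_congr rfl fun i hi => by
        rw [Function.update_of_ne (Finset.ne_of_mem_erase hi)]
    have hBprod : (∏ i ∈ Finset.univ.erase j,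
        bern (q i (Function.update (base x') j v i)) (y i)) = Pb x' y := by
      exact Finset.prod_congr rfl fun i hi => by
        rw [Function.update_of_ne (Finset.ne_of_mem_erase hi)]
    rw [hDprod, hBprod, Function.update_self]
    ring
  have h2 : E' m D p S - E' m D q S
      = ∑ x' : {i : Fin m // i ≠ j} → X, ∑ y : Fin m → Bool,
          (Pd x' * Pb x' y) * ((if y j then (1:ℝ) else -1) *
            (∑ v, D v * (S (Function.update (base x') j v) y * (p j v - q j v)))) := by
    rw [h1, sum_split j]
    rw [Finset.sum_comm]
    refine Finset.sum_congr rfl fun x' _ => ?_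
    rw [Finset.sum_comm]
    refine Finset.sum_congr rfl fun y _ => ?_
    rw [Finset.mul_sum, Finset.mul_sum]
    exact Finset.sum_congr rfl fun v _ => hpoint v x' y
  rw [h2]
  have habs : ∀ (x' : {i : Fin m // i ≠ j} → X) (y : Fin m → Bool),
      |(Pd x' * Pb x' y) * ((if y j then (1:ℝ) else -1) *
        (∑ v, D v * (S (Function.update (base x') j v) y * (p j v - q j v))))|
      ≤ (Pd x' * Pb x' y) * δ := by
    intro x' y
    have hPd0 : 0 ≤ Pd x' := Finset.prod_nonneg fun i _ => hD0 _
    have hPb0 : 0 ≤ Pb x' y := Finset.prod_nonneg fun i _ => bern_nonneg (hq _ _) _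
    have hε : |(if y j then (1:ℝ) else -1)| = 1 := by
      cases hyj : y j <;> simp
    rw [abs_mul, abs_of_nonneg (mul_nonneg hPd0 hPb0), abs_mul, hε, one_mul]
    exact mul_le_mul_of_nonneg_left (hS (base x') y) (mul_nonneg hPd0 hPb0)
  calc |∑ x' : {i : Fin m // i ≠ j} → X, ∑ y : Fin m → Bool,
          (Pd x' * Pb x' y) * ((if y j then (1:ℝ) else -1) *
            (∑ v, D v * (S (Function.update (base x') j v) y * (p j v - q j v))))|
      ≤ ∑ x' : {i : Fin m // i ≠ j} → X, ∑ y : Fin m → Bool, (Pd x' * Pb x' y) * δ := by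
        refine (Finset.abs_sum_le_sum_abs _ _).trans ?_
        refine Finset.sum_le_sum fun x' _ => ?_
        refine (Finset.abs_sum_le_sum_abs _ _).trans ?_
        exact Finset.sum_le_sum fun y _ => habs x' y
    _ = 2 * δ := by
        have hyb : ∀ x', ∑ y : Fin m → Bool, Pb x' y = 2 := by
          intro x'
          have : ∀ y : Fin m → Bool, Pb x' y
              = ∏ i, (if i = j then (1:ℝ) else bern (q i (base x' i)) (y i)) := by
            intro y
            rw [← Finset.mul_prod_erase Finset.univ _ (Finset.mem_univ j), if_pos rfl, one_mul]
            exact Finset.prod_congr rfl fun i hi => by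
              rw [if_neg (Finset.ne_of_mem_erase hi)]
          simp_rw [this]
          rw [← Fintype.prod_sum (fun i (b : Bool) => if i = j then (1:ℝ) else bern (q i (base x' i)) b)]
          have : ∀ i : Fin m, (∑ b : Bool, if i = j then (1:ℝ) else bern (q i (base x' i)) b)
              = if i = j then 2 else 1 := by
            intro i
            by_cases hi : i = j
            · simp [hi]
            · simp [hi, bern]
          simp_rw [this]
          simp
        have hxd : ∑ x' : {i : Fin m // i ≠ j} → X, Pd x' = 1 := by
          have hthis : ∀ x' : {i : Fin m // i ≠ j} → X, Pd x' = ∏ s : {i : Fin m // i ≠ j}, D (x' s) := by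
            intro x'
            have h1 : Pd x' = ∏ s : {i : Fin m // i ≠ j}, D (base x' (s : Fin m)) :=
              Finset.prod_subtype (Finset.univ.erase j)
                (fun i => by simp [Finset.mem_erase]) (fun i => D (base x' i))
            rw [h1]
            refine Finset.prod_congr rfl fun s _ => ?_
            congr 1
            show (Equiv.funSplitAt j X).symm (w0, x') (s : Fin m) = x' s
            simp [s.2]
          simp_rw [hthis]
          rw [← Fintype.prod_sum (fun (s : {i : Fin m // i ≠ j}) (v : X) => D v)]
          simp [hD1]
        simp_rw [← Finset.sum_mul, ← Finset.mul_sum, hyb]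
        rw [← Finset.sum_mul, hxd]
        ring

lemma det_prod {X : Type*} {m : ℕ} (f : X → Bool) (x : Fin m → X) (y : Fin m → Bool) :
    (∏ i, bern (if f (x i) then (1:ℝ) else 0) (y i))
      = if y = (fun i => f (x i)) then 1 else 0 := by
  have h1 : ∀ i : Fin m, bern (if f (x i) then (1:ℝ) else 0) (y i)
      = if y i = f (x i) then 1 else 0 := by
    intro i; cases hy : y i <;> cases hf : f (x i) <;> simp [bern, hf]
  have h2 : (∀ i ∈ Finset.univ, y i = f (x i)) ↔ y = fun i => f (x i) := by
    simp [funext_iff]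
  simp_rw [h1]
  rw [Finset.prod_boole]
  simp only [h2]

lemma E'_det {X : Type*} [Fintype X] (m : ℕ) (D : X → ℝ) (f : X → Bool)
    (S : (Fin m → X) → (Fin m → Bool) → ℝ) :
    E' m D (fun _ x => if f x then (1:ℝ) else 0) S
      = ∑ x : Fin m → X, (∏ i, D (x i)) * S x (fun i => f (x i)) := by
  rw [E']
  refine Finset.sum_congr rfl fun x _ => ?_
  rw [Finset.sum_eq_single (fun i => f (x i))
    (fun y _ hy => by rw [det_prod, if_neg hy]; ring)
    (fun h => absurd (Finset.mem_univ _) h)]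
  rw [det_prod, if_pos rfl, mul_one]

lemma E'_chain {X : Type*} [Fintype X] [Nonempty X] (m : ℕ)
    (D : X → ℝ) (hD0 : ∀ x, 0 ≤ D x) (hD1 : ∑ x, D x = 1)
    (f : X → Bool) (ftil : X → ℝ) (hftil : ∀ x, ftil x ∈ Set.Icc (0:ℝ) 1)
    (S : (Fin m → X) → (Fin m → Bool) → ℝ) (δ : ℝ) (hδ : 0 ≤ δ)
    (hS : ∀ (j : Fin m) (xs : Fin m → X) (y : Fin m → Bool),
      |∑ v, D v * (S (Function.update xs j v) y * ((if f v then (1:ℝ) else 0) - ftil v))| ≤ δ) :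
    |E' m D (fun _ x => if f x then (1:ℝ) else 0) S - E' m D (fun _ => ftil) S|
      ≤ 2 * m * δ := by
  classical
  set P : ℕ → Fin m → X → ℝ :=
    fun k i x => if (i : ℕ) < k then (if f x then (1:ℝ) else 0) else ftil x with hP
  have hP0 : P 0 = fun _ => ftil := by
    funext i x; simp [hP]
  have hPm : P m = fun _ x => if f x then (1:ℝ) else 0 := by
    funext i x; simp [hP, i.isLt]
  have key : ∀ k, k ≤ m → |E' m D (P k) S - E' m D (P 0) S| ≤ 2 * k * δ := by
    intro k
    induction k with
    | zero => intro _; simp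
    | succ k ih =>
      intro hk
      have hk' : k < m := hk
      have hkm : k ≤ m := le_of_lt hk'
      set j : Fin m := ⟨k, hk'⟩ with hj
      have hstep : |E' m D (P (k+1)) S - E' m D (P k) S| ≤ 2 * δ := by
        refine E'_step m D hD0 hD1 (P (k+1)) (P k) ?_ j ?_ S δ ?_
        · intro i x
          simp only [hP]
          split
          · split <;> exact ⟨by norm_num, by norm_num⟩
          · exact hftil x
        · intro i hij
          funext x
          have hvne : (i : ℕ) ≠ k := fun h => hij (Fin.ext h)
          have : (i : ℕ) < k + 1 ↔ (i : ℕ) < k := by omega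
          simp [hP, this]
        · intro xs y
          have hpq : ∀ v : X, P (k+1) j v - P k j v = (if f v then (1:ℝ) else 0) - ftil v := by
            intro v
            simp [hP, hj]
          simp_rw [hpq]
          exact hS j xs y
      calc |E' m D (P (k+1)) S - E' m D (P 0) S|
          ≤ |E' m D (P (k+1)) S - E' m D (P k) S| + |E' m D (P k) S - E' m D (P 0) S| := by
            have := abs_sub_abs_le_abs_sub (E' m D (P (k+1)) S) (E' m D (P k) S)
            exact (abs_sub_le _ _ _)
        _ ≤ 2 * δ + 2 * k * δ := add_le_add hstep (ih hkm)
        _ = 2 * ((k+1 : ℕ) : ℝ) * δ := by push_cast; ring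
  have := key m le_rfl
  rw [hP0, hPm] at this
  exact this


lemma bern_decomp {X : Type*} [Fintype X] [Nonempty X]
    (ftil : X → ℝ) (hftil : ∀ x, ftil x ∈ Set.Icc (0:ℝ) 1) :
    ∃ (k : ℕ) (w : Fin (k+1) → ℝ) (τ : Fin (k+1) → ℝ),
      (∀ j, 0 ≤ w j) ∧ (∑ j, w j = 1) ∧
      (∀ (v : X) (b : Bool),
        bern (ftil v) b = ∑ j, w j * (if b = true ↔ τ j ≤ ftil v then 1 else 0)) := by
  classical
  set V : Finset ℝ := Finset.image ftil Finset.univ with hV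
  have hVne : V.Nonempty :=
    ⟨ftil (Classical.arbitrary X), Finset.mem_image_of_mem _ (Finset.mem_univ _)⟩
  set k := V.card with hkdef
  have hk : 0 < k := Finset.card_pos.mpr hVne
  set L := V.orderIsoOfFin rfl with hL
  have hVmem : ∀ v ∈ V, 0 ≤ v ∧ v ≤ 1 := by
    intro v hv
    obtain ⟨x, -, rfl⟩ := Finset.mem_image.mp hv
    exact ⟨(hftil x).1, (hftil x).2⟩
  have hLmem : ∀ i : Fin k, 0 ≤ ((L i : ℝ)) ∧ ((L i : ℝ)) ≤ 1 := fun i => hVmem _ (L i).2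
  set c : ℕ → ℝ := fun n =>
    if h : n = 0 then 0 else if h2 : n ≤ k then ((L ⟨n-1, by omega⟩ : ℝ)) else 1 with hc
  have hc0 : c 0 = 0 := by simp [hc]
  have hcK : c (k+1) = 1 := by
    have h1 : ¬ (k+1 = 0) := by omega
    have h2 : ¬ (k+1 ≤ k) := by omega
    simp [hc, h1, h2]
  have hcL : ∀ i : Fin k, c ((i : ℕ)+1) = (L i : ℝ) := by
    intro i
    have h1 : ¬ ((i:ℕ)+1 = 0) := by omega
    have h2 : (i:ℕ)+1 ≤ k := i.isLt
    simp only [hc, dif_neg h1, dif_pos h2, Nat.add_sub_cancel, Fin.eta]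
  have hLcoe_mono : ∀ a b : Fin k, a ≤ b → (L a : ℝ) ≤ (L b : ℝ) := by
    intro a b hab
    exact Subtype.coe_le_coe.mpr (L.le_iff_le.mpr hab)
  have hstep : ∀ n, n < k + 1 → c n ≤ c (n+1) := by
    intro n hn
    match n with
    | 0 =>
      rw [hc0]
      rw [show (0:ℕ)+1 = ((⟨0, hk⟩ : Fin k) : ℕ) + 1 from rfl, hcL ⟨0, hk⟩]
      exact (hLmem ⟨0, hk⟩).1
    | Nat.succ n' =>
      have hn' : n' + 1 ≤ k := by omega
      rcases lt_or_eq_of_le hn' with hlt | heq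
      · have h1 : c (n'+1) = (L ⟨n', by omega⟩ : ℝ) := hcL ⟨n', by omega⟩
        have h2 : c (n'+2) = (L ⟨n'+1, hlt⟩ : ℝ) := hcL ⟨n'+1, hlt⟩
        rw [h1, h2]
        exact hLcoe_mono _ _ (by simp [Fin.le_def])
      · have h1 : c (n'+1) = (L ⟨n', by omega⟩ : ℝ) := hcL ⟨n', by omega⟩
        have h2 : c (n'+2) = 1 := by rw [show n'+2 = k+1 by omega, hcK]
        rw [h1, h2]
        exact (hLmem _).2
  refine ⟨k, fun j => c ((j:ℕ)+1) - c (j:ℕ),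
    fun j => if h : (j:ℕ) < k then ((L ⟨j, h⟩ : ℝ)) else 2, ?_, ?_, ?_⟩
  · intro j
    have := hstep (j : ℕ) j.isLt
    dsimp only
    linarith
  · rw [Fin.sum_univ_eq_sum_range (fun j => c (j+1) - c j) (k+1),
      Finset.sum_range_sub c (k+1), hc0, hcK]
    ring
  · intro v b
    have hv : ftil v ∈ V := Finset.mem_image_of_mem _ (Finset.mem_univ _)
    set i₀ : Fin k := L.symm ⟨ftil v, hv⟩ with hi₀
    have hLi₀ : (L i₀ : ℝ) = ftil v := by
      rw [hi₀, OrderIso.apply_symm_apply]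
    have hind : ∀ j : Fin (k+1),
        ((if h : (j:ℕ) < k then ((L ⟨j, h⟩ : ℝ)) else 2) ≤ ftil v) ↔ (j : ℕ) ≤ (i₀ : ℕ) := by
      intro j
      by_cases hj : (j:ℕ) < k
      · rw [dif_pos hj, ← hLi₀]
        constructor
        · intro h
          exact (L.le_iff_le.mp (Subtype.coe_le_coe.mp h))
        · intro h
          exact hLcoe_mono _ _ h
      · rw [dif_neg hj]
        constructor
        · intro h
          exfalso; linarith [(hftil v).2]
        · intro h
          exfalso
          have := i₀.isLt
          omega
    have hA : ∑ j : Fin (k+1), (c ((j:ℕ)+1) - c (j:ℕ)) *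
        (if (if h : (j:ℕ) < k then ((L ⟨j, h⟩ : ℝ)) else 2) ≤ ftil v then (1:ℝ) else 0)
        = ftil v := by
      have h1 : ∀ j : Fin (k+1), (c ((j:ℕ)+1) - c (j:ℕ)) *
          (if (if h : (j:ℕ) < k then ((L ⟨j, h⟩ : ℝ)) else 2) ≤ ftil v then (1:ℝ) else 0)
          = if (j:ℕ) ≤ (i₀:ℕ) then c ((j:ℕ)+1) - c (j:ℕ) else 0 := by
        intro j
        by_cases h : (j:ℕ) ≤ (i₀:ℕ)
        · rw [if_pos ((hind j).mpr h), if_pos h, mul_one]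
        · rw [if_neg (fun hh => h ((hind j).mp hh)), if_neg h, mul_zero]
      simp_rw [h1]
      rw [Fin.sum_univ_eq_sum_range (fun j => if j ≤ (i₀:ℕ) then c (j+1) - c j else 0) (k+1)]
      have hsub : Finset.range ((i₀:ℕ)+1) ⊆ Finset.range (k+1) :=
        Finset.range_subset_range.mpr (by have := i₀.isLt; omega)
      rw [← Finset.sum_subset hsub (fun j _ hj => by
        rw [if_neg (by simp only [Finset.mem_range] at hj ⊢; omega)])]
      have : ∀ j ∈ Finset.range ((i₀:ℕ)+1), (if j ≤ (i₀:ℕ) then c (j+1) - c j else 0)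
          = c (j+1) - c j := by
        intro j hj
        rw [if_pos (by simp only [Finset.mem_range] at hj; omega)]
      rw [Finset.sum_congr rfl this, Finset.sum_range_sub c ((i₀:ℕ)+1), hc0, hcL i₀, hLi₀]
      ring
    have hsum : ∑ j : Fin (k+1), (c ((j:ℕ)+1) - c (j:ℕ)) = 1 := by
      rw [Fin.sum_univ_eq_sum_range (fun j => c (j+1) - c j) (k+1),
        Finset.sum_range_sub c (k+1), hc0, hcK]
      ring
    cases b
    · have h1 : ∀ j : Fin (k+1),
          (if (false = true ↔ (if h : (j:ℕ) < k then ((L ⟨j, h⟩ : ℝ)) else 2) ≤ ftil v)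
            then (1:ℝ) else 0)
          = 1 - (if (if h : (j:ℕ) < k then ((L ⟨j, h⟩ : ℝ)) else 2) ≤ ftil v then (1:ℝ) else 0) := by
        intro j
        by_cases h : (if h : (j:ℕ) < k then ((L ⟨j, h⟩ : ℝ)) else 2) ≤ ftil v
        · rw [if_neg (fun hiff => absurd (hiff.mpr h) (by simp)), if_pos h]
          norm_num
        · rw [if_pos ⟨fun hf => absurd hf (by simp), fun hq => absurd hq h⟩, if_neg h]
          norm_num
      have hgoal : ∑ j : Fin (k+1), (c ((j:ℕ)+1) - c (j:ℕ)) *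
          (if (false = true ↔ (if h : (j:ℕ) < k then ((L ⟨j, h⟩ : ℝ)) else 2) ≤ ftil v)
            then (1:ℝ) else 0) = 1 - ftil v := by
        have h2 : ∀ j : Fin (k+1), (c ((j:ℕ)+1) - c (j:ℕ)) *
            (if (false = true ↔ (if h : (j:ℕ) < k then ((L ⟨j, h⟩ : ℝ)) else 2) ≤ ftil v)
              then (1:ℝ) else 0)
            = (c ((j:ℕ)+1) - c (j:ℕ)) - (c ((j:ℕ)+1) - c (j:ℕ)) *
              (if (if h : (j:ℕ) < k then ((L ⟨j, h⟩ : ℝ)) else 2) ≤ ftil v then (1:ℝ) else 0) :=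
          fun j => by rw [h1 j]; ring
        rw [Finset.sum_congr rfl (fun j _ => h2 j), Finset.sum_sub_distrib, hsum, hA]
      rw [hgoal]
      simp [bern]
    · have h1 : ∀ j : Fin (k+1),
          (if (true = true ↔ (if h : (j:ℕ) < k then ((L ⟨j, h⟩ : ℝ)) else 2) ≤ ftil v)
            then (1:ℝ) else 0)
          = (if (if h : (j:ℕ) < k then ((L ⟨j, h⟩ : ℝ)) else 2) ≤ ftil v then (1:ℝ) else 0) := by
        intro j
        by_cases h : (if h : (j:ℕ) < k then ((L ⟨j, h⟩ : ℝ)) else 2) ≤ ftil v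
        · rw [if_pos ⟨fun _ => h, fun _ => rfl⟩, if_pos h]
        · rw [if_neg (fun hiff => h (hiff.mp rfl)), if_neg h]
      have hgoal : ∑ j : Fin (k+1), (c ((j:ℕ)+1) - c (j:ℕ)) *
          (if (true = true ↔ (if h : (j:ℕ) < k then ((L ⟨j, h⟩ : ℝ)) else 2) ≤ ftil v)
            then (1:ℝ) else 0) = ftil v := by
        rw [Finset.sum_congr rfl (fun j _ => by rw [h1 j])]
        exact hA
      rw [hgoal]
      simp [bern]

lemma E'_gamma {X : Type*} [Fintype X] [Nonempty X] (m : ℕ) (D : X → ℝ)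
    (ftil : X → ℝ) (hftil : ∀ x, ftil x ∈ Set.Icc (0:ℝ) 1)
    (G : (Fin m → X) → (Fin m → Bool) → ℝ) (γ : ℝ)
    (hG : ∀ t : Fin m → ℝ,
      |labeledExp m D (fun _ => (1 : ℝ) / 2)
        (fun x y =>
          (if ∀ i, (y i = true ↔ t i ≤ ftil (x i)) then (1 : ℝ) else 0) * G x y)| ≤ γ) :
    |E' m D (fun _ => ftil) G| ≤ 2 ^ m * γ := by
  classical
  obtain ⟨k, w, τ, hw0, hw1, hb⟩ := bern_decomp ftil hftil
  have h2m : (2:ℝ)^m * ((1:ℝ)/2)^m = 1 := by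
    rw [one_div, inv_pow, mul_inv_cancel₀ (by positivity)]
  -- pointwise decomposition of the Bernoulli product
  have hprod : ∀ (x : Fin m → X) (y : Fin m → Bool),
      (∏ i, bern (ftil (x i)) (y i))
        = ∑ t : Fin m → Fin (k+1), (∏ i, w (t i)) *
            (if ∀ i, (y i = true ↔ τ (t i) ≤ ftil (x i)) then (1:ℝ) else 0) := by
    intro x y
    calc (∏ i, bern (ftil (x i)) (y i))
        = ∏ i, ∑ j, w j * (if y i = true ↔ τ j ≤ ftil (x i) then (1:ℝ) else 0) :=
          Finset.prod_congr rfl fun i _ => hb (x i) (y i)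
      _ = ∑ t : Fin m → Fin (k+1),
            ∏ i, (w (t i) * (if y i = true ↔ τ (t i) ≤ ftil (x i) then (1:ℝ) else 0)) :=
          Fintype.prod_sum _
      _ = ∑ t : Fin m → Fin (k+1), (∏ i, w (t i)) *
            (if ∀ i, (y i = true ↔ τ (t i) ≤ ftil (x i)) then (1:ℝ) else 0) := by
          refine Finset.sum_congr rfl fun t _ => ?_
          rw [Finset.prod_mul_distrib]
          congr 1
          rw [Finset.prod_boole]
          simp
  -- half-labeled expectation as plain sum
  have hhalfprod : ∀ y : Fin m → Bool, (∏ i : Fin m, bern ((1:ℝ)/2) (y i)) = ((1:ℝ)/2)^m := by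
    intro y
    have : ∀ i : Fin m, bern ((1:ℝ)/2) (y i) = (1:ℝ)/2 := by
      intro i; cases y i <;> simp [bern] <;> norm_num
    rw [Finset.prod_congr rfl fun i _ => this i, Finset.prod_const]
    simp
  have hinner : ∀ t : Fin m → Fin (k+1),
      (∑ x : Fin m → X, ∑ y : Fin m → Bool, (∏ i, D (x i)) *
        ((if ∀ i, (y i = true ↔ τ (t i) ≤ ftil (x i)) then (1:ℝ) else 0) * G x y))
      = 2^m * labeledExp m D (fun _ => (1:ℝ)/2)
          (fun x y => (if ∀ i, (y i = true ↔ τ (t i) ≤ ftil (x i)) then (1:ℝ) else 0) * G x y) := by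
    intro t
    rw [labeledExp, Finset.mul_sum]
    refine Finset.sum_congr rfl fun x _ => ?_
    rw [Finset.mul_sum]
    refine Finset.sum_congr rfl fun y _ => ?_
    rw [hhalfprod y]
    linear_combination (-((∏ i, D (x i))) *
      ((if ∀ i, (y i = true ↔ τ (t i) ≤ ftil (x i)) then (1:ℝ) else 0) * G x y)) * h2m
  -- swap
  have hswap : E' m D (fun _ => ftil) G
      = ∑ t : Fin m → Fin (k+1), (∏ i, w (t i)) *
          (∑ x : Fin m → X, ∑ y : Fin m → Bool, (∏ i, D (x i)) *
            ((if ∀ i, (y i = true ↔ τ (t i) ≤ ftil (x i)) then (1:ℝ) else 0) * G x y)) := by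
    rw [E']
    have h1 : ∀ (x : Fin m → X) (y : Fin m → Bool),
        (∏ i, D (x i)) * (∏ i, bern (ftil (x i)) (y i)) * G x y
        = ∑ t : Fin m → Fin (k+1), (∏ i, w (t i)) *
            ((∏ i, D (x i)) *
              ((if ∀ i, (y i = true ↔ τ (t i) ≤ ftil (x i)) then (1:ℝ) else 0) * G x y)) := by
      intro x y
      rw [hprod x y, Finset.mul_sum, Finset.sum_mul]
      exact Finset.sum_congr rfl fun t _ => by ring
    simp_rw [h1]
    rw [Finset.sum_congr rfl fun x (_ : x ∈ Finset.univ) => Finset.sum_comm, Finset.sum_comm]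
    refine Finset.sum_congr rfl fun t _ => ?_
    rw [Finset.mul_sum]
    exact Finset.sum_congr rfl fun x _ => by rw [Finset.mul_sum]
  -- total weight
  have hwt : ∑ t : Fin m → Fin (k+1), (∏ i, w (t i)) = 1 := by
    rw [← Fintype.prod_sum (fun (_ : Fin m) (j : Fin (k+1)) => w j)]
    simp [hw1]
  have hγ0 : 0 ≤ γ := le_trans (abs_nonneg _) (hG (fun _ => 0))
  rw [hswap]
  calc |∑ t : Fin m → Fin (k+1), (∏ i, w (t i)) *
          (∑ x : Fin m → X, ∑ y : Fin m → Bool, (∏ i, D (x i)) *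
            ((if ∀ i, (y i = true ↔ τ (t i) ≤ ftil (x i)) then (1:ℝ) else 0) * G x y))|
      ≤ ∑ t : Fin m → Fin (k+1), (∏ i, w (t i)) * (2^m * γ) := by
        refine (Finset.abs_sum_le_sum_abs _ _).trans (Finset.sum_le_sum fun t _ => ?_)
        have hwt0 : 0 ≤ ∏ i, w (t i) := Finset.prod_nonneg fun i _ => hw0 _
        rw [abs_mul, abs_of_nonneg hwt0, hinner t, abs_mul, abs_of_nonneg (by positivity : (0:ℝ) ≤ 2^m)]
        exact mul_le_mul_of_nonneg_left
          (mul_le_mul_of_nonneg_left (hG (fun i => τ (t i))) (by positivity)) hwt0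
    _ = 2^m * γ := by rw [← Finset.sum_mul, hwt, one_mul]

lemma E'_sub {X : Type*} [Fintype X] (m : ℕ) (D : X → ℝ) (p : Fin m → X → ℝ)
    (S1 S2 : (Fin m → X) → (Fin m → Bool) → ℝ) :
    E' m D p (fun x y => S1 x y - S2 x y) = E' m D p S1 - E' m D p S2 := by
  rw [E', E', E', ← Finset.sum_sub_distrib]
  refine Finset.sum_congr rfl fun x _ => ?_
  rw [← Finset.sum_sub_distrib]
  exact Finset.sum_congr rfl fun y _ => by ring


/-- If (i) `f̃` fools every one-way restriction of the Boolean tester `T` and of the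
simulator `T̃` against `f` up to error `δ`, and (ii) `T̃` fools every consistency
indicator in `Γ_m({f̃})` against the mean tester `T̄(x,y) = 2^{-ℓ} ∑_r T(x,y,r)` up to
error `γ` on i.i.d. `D`-samples with uniform labels, then the acceptance probability of
`T` and the expected output of `T̃`, on samples labeled deterministically by `f`,
differ by at most `4 m δ + 2^m γ`. -/
theorem stmt_7 {X : Type*} [Fintype X] [DecidableEq X] [Nonempty X]
    (m l : ℕ)
    (D : X → ℝ) (hD0 : ∀ x, 0 ≤ D x) (hD1 : ∑ x, D x = 1)
    (δ γ : ℝ) (hδ : 0 < δ) (hγ : 0 < γ)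
    (T : (Fin m → X) → (Fin m → Bool) → (Fin l → Bool) → Bool)
    (Ttil : (Fin m → X) → (Fin m → Bool) → ℝ)
    (hTtil : ∀ x y, Ttil x y ∈ Set.Icc (0 : ℝ) 1)
    (f : X → Bool) (ftil : X → ℝ) (hftil : ∀ x, ftil x ∈ Set.Icc (0 : ℝ) 1)
    (Tbar : (Fin m → X) → (Fin m → Bool) → ℝ)
    (hTbar : ∀ x y,
      Tbar x y = ((1 : ℝ) / 2 ^ l) * ∑ r : Fin l → Bool, (if T x y r then (1 : ℝ) else 0))
    -- (i) regularity with respect to the one-way restrictions of `T` …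
    (hregT : ∀ (i : Fin m) (xs : Fin m → X) (y : Fin m → Bool) (r : Fin l → Bool),
      |∑ x, D x * ((if T (Function.update xs i x) y r then (1 : ℝ) else 0) *
        ((if f x then (1 : ℝ) else 0) - ftil x))| ≤ δ)
    -- … and of `T̃`
    (hregTtil : ∀ (i : Fin m) (xs : Fin m → X) (y : Fin m → Bool),
      |∑ x, D x * (Ttil (Function.update xs i x) y *
        ((if f x then (1 : ℝ) else 0) - ftil x))| ≤ δ)
    -- (ii) regularity with respect to the consistency indicators `Γ_m({f̃})`
    (hΓ : ∀ t : Fin m → ℝ,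
      |labeledExp m D (fun _ => (1 : ℝ) / 2)
        (fun x y =>
          (if ∀ i, (y i = true ↔ t i ≤ ftil (x i)) then (1 : ℝ) else 0) *
            (Tbar x y - Ttil x y))| ≤ γ) :
    |(∑ x : Fin m → X, (∏ i, D (x i)) *
        (((1 : ℝ) / 2 ^ l) * ∑ r : Fin l → Bool,
          (if T x (fun i => f (x i)) r then (1 : ℝ) else 0))) -
      (∑ x : Fin m → X, (∏ i, D (x i)) * Ttil x (fun i => f (x i)))| ≤
      4 * m * δ + 2 ^ m * γ := by
  classical
  have h2l : (0:ℝ) < 2 ^ l := by positivity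
  -- rewrite the two deterministic-label sums as E' values
  have hA : (∑ x : Fin m → X, (∏ i, D (x i)) *
        (((1 : ℝ) / 2 ^ l) * ∑ r : Fin l → Bool,
          (if T x (fun i => f (x i)) r then (1 : ℝ) else 0)))
      = E' m D (fun _ v => if f v then (1:ℝ) else 0) Tbar := by
    rw [E'_det m D f Tbar]
    exact Finset.sum_congr rfl fun x _ => by rw [hTbar x (fun i => f (x i))]
  have hB : (∑ x : Fin m → X, (∏ i, D (x i)) * Ttil x (fun i => f (x i)))
      = E' m D (fun _ v => if f v then (1:ℝ) else 0) Ttil := by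
    rw [E'_det m D f Ttil]
  -- hybrid bound for Tbar
  have hSTbar : ∀ (j : Fin m) (xs : Fin m → X) (y : Fin m → Bool),
      |∑ v, D v * (Tbar (Function.update xs j v) y *
        ((if f v then (1:ℝ) else 0) - ftil v))| ≤ δ := by
    intro j xs y
    have h1 : ∀ v : X, D v * (Tbar (Function.update xs j v) y *
        ((if f v then (1:ℝ) else 0) - ftil v))
        = ((1:ℝ)/2^l) * ∑ r : Fin l → Bool,
            D v * ((if T (Function.update xs j v) y r then (1:ℝ) else 0) *
              ((if f v then (1:ℝ) else 0) - ftil v)) := by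
      intro v
      rw [hTbar]
      have hs : ∑ r : Fin l → Bool,
          D v * ((if T (Function.update xs j v) y r then (1:ℝ) else 0) *
            ((if f v then (1:ℝ) else 0) - ftil v))
          = (∑ r : Fin l → Bool, (if T (Function.update xs j v) y r then (1:ℝ) else 0)) *
            (D v * ((if f v then (1:ℝ) else 0) - ftil v)) := by
        rw [Finset.sum_mul]
        exact Finset.sum_congr rfl fun r _ => by ring
      rw [hs]
      ring
    rw [Finset.sum_congr rfl fun v _ => h1 v, ← Finset.mul_sum, Finset.sum_comm]
    rw [abs_mul, abs_of_pos (by positivity : (0:ℝ) < 1/2^l)]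
    have hbd : |∑ r : Fin l → Bool, ∑ v : X,
        D v * ((if T (Function.update xs j v) y r then (1:ℝ) else 0) *
          ((if f v then (1:ℝ) else 0) - ftil v))| ≤ (2:ℝ)^l * δ := by
      refine (Finset.abs_sum_le_sum_abs _ _).trans ?_
      calc ∑ r : Fin l → Bool, |∑ v : X,
            D v * ((if T (Function.update xs j v) y r then (1:ℝ) else 0) *
              ((if f v then (1:ℝ) else 0) - ftil v))|
          ≤ ∑ _r : Fin l → Bool, δ := Finset.sum_le_sum fun r _ => hregT j xs y r
        _ = (2:ℝ)^l * δ := by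
            rw [Finset.sum_const, Finset.card_univ]
            simp [mul_comm]
    calc (1/2^l) * |∑ r : Fin l → Bool, ∑ v : X,
          D v * ((if T (Function.update xs j v) y r then (1:ℝ) else 0) *
            ((if f v then (1:ℝ) else 0) - ftil v))|
        ≤ (1/2^l) * ((2:ℝ)^l * δ) := by
          exact mul_le_mul_of_nonneg_left hbd (by positivity)
      _ = δ := by field_simp
  have hchainT : |E' m D (fun _ v => if f v then (1:ℝ) else 0) Tbar
      - E' m D (fun _ => ftil) Tbar| ≤ 2 * m * δ :=
    E'_chain m D hD0 hD1 f ftil hftil Tbar δ hδ.le hSTbar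
  have hchainTtil : |E' m D (fun _ v => if f v then (1:ℝ) else 0) Ttil
      - E' m D (fun _ => ftil) Ttil| ≤ 2 * m * δ :=
    E'_chain m D hD0 hD1 f ftil hftil Ttil δ hδ.le (fun j xs y => hregTtil j xs y)
  have hgam : |E' m D (fun _ => ftil) (fun x y => Tbar x y - Ttil x y)| ≤ 2^m * γ :=
    E'_gamma m D ftil hftil (fun x y => Tbar x y - Ttil x y) γ hΓ
  rw [E'_sub] at hgam
  rw [hA, hB]
  set A1 := E' m D (fun _ v => if f v then (1:ℝ) else 0) Tbar
  set A2 := E' m D (fun _ => ftil) Tbar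
  set B1 := E' m D (fun _ v => if f v then (1:ℝ) else 0) Ttil
  set B2 := E' m D (fun _ => ftil) Ttil
  have h3 : |B2 - B1| ≤ 2 * m * δ := by rw [abs_sub_comm]; exact hchainTtil
  calc |A1 - B1| ≤ |A1 - A2| + |A2 - B2| + |B2 - B1| := by
        have t1 : |A1 - B1| ≤ |A1 - B2| + |B2 - B1| := abs_sub_le _ _ _
        have t2 : |A1 - B2| ≤ |A1 - A2| + |A2 - B2| := abs_sub_le _ _ _
        linarith
    _ ≤ 2 * m * δ + 2^m * γ + 2 * m * δ := by
        exact add_le_add (add_le_add hchainT hgam) h3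
    _ = 4 * m * δ + 2^m * γ := by ring
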